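/- arXiv:1706.08923 — 3 statements merged into one kernel-verified Lean document; each statement's English description precedes it below -/
import Mathlib

section
/- For the map f*(x_1,x_2,x_3) = (x_2 ⊕ x_3, x_1 ⊕ ¬x_3, ¬x_3) on {0,1}^3, the asynchronous iteration graph Γ(f*) (with an arc from x to F_{f*}(i,x) for each i ∈ {1,2,3}) is strongly connected. -/
/-- The map f*(x_1, x_2, x_3) = (x_2 ⊕ x_3, x_1 ⊕ ¬x_3, ¬x_3) on {0,1}^3. -/
def fstar : (Fin 3 → Bool) → (Fin 3 → Bool) := fun x =>
  ![xor (x 1) (x 2), xor (x 0) (!(x 2)), !(x 2)]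

private lemma step' (x y : Fin 3 → Bool) (i : Fin 3) (h : y = Function.update x i (fstar x i)) : Relation.ReflTransGen (fun a b => ∃ i : Fin 3, b = Function.update a i (fstar a i)) x y := Relation.ReflTransGen.single ⟨i, h⟩

private lemma h000 : Relation.ReflTransGen (fun a b => ∃ i : Fin 3, b = Function.update a i (fstar a i)) ![false, false, false] ![false, false, false] := Relation.ReflTransGen.refl

private lemma g000 : Relation.ReflTransGen (fun a b => ∃ i : Fin 3, b = Function.update a i (fstar a i)) ![false, false, false] ![false, false, false] := Relation.ReflTransGen.refl

private lemma h001 : Relation.ReflTransGen (fun a b => ∃ i : Fin 3, b = Function.update a i (fstar a i)) ![false, false, true] ![false, false, false] := (step' ![false, false, true] ![false, false, false] 2 (by decide))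

private lemma g001 : Relation.ReflTransGen (fun a b => ∃ i : Fin 3, b = Function.update a i (fstar a i)) ![false, false, false] ![false, false, true] := (step' ![false, false, false] ![false, false, true] 2 (by decide))

private lemma h010 : Relation.ReflTransGen (fun a b => ∃ i : Fin 3, b = Function.update a i (fstar a i)) ![false, true, false] ![false, false, false] := (Relation.ReflTransGen.trans (Relation.ReflTransGen.trans (step' ![false, true, false] ![true, true, false] 0 (by decide)) (step' ![true, true, false] ![true, false, false] 1 (by decide))) (step' ![true, false, false] ![false, false, false] 0 (by decide)))

private lemma g010 : Relation.ReflTransGen (fun a b => ∃ i : Fin 3, b = Function.update a i (fstar a i)) ![false, false, false] ![false, true, false] := (step' ![false, false, false] ![false, true, false] 1 (by decide))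

private lemma h011 : Relation.ReflTransGen (fun a b => ∃ i : Fin 3, b = Function.update a i (fstar a i)) ![false, true, true] ![false, false, false] := (Relation.ReflTransGen.trans (step' ![false, true, true] ![false, false, true] 1 (by decide)) (step' ![false, false, true] ![false, false, false] 2 (by decide)))

private lemma g011 : Relation.ReflTransGen (fun a b => ∃ i : Fin 3, b = Function.update a i (fstar a i)) ![false, false, false] ![false, true, true] := (Relation.ReflTransGen.trans (step' ![false, false, false] ![false, true, false] 1 (by decide)) (step' ![false, true, false] ![false, true, true] 2 (by decide)))

private lemma h100 : Relation.ReflTransGen (fun a b => ∃ i : Fin 3, b = Function.update a i (fstar a i)) ![true, false, false] ![false, false, false] := (step' ![true, false, false] ![false, false, false] 0 (by decide))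

private lemma g100 : Relation.ReflTransGen (fun a b => ∃ i : Fin 3, b = Function.update a i (fstar a i)) ![false, false, false] ![true, false, false] := (Relation.ReflTransGen.trans (Relation.ReflTransGen.trans (step' ![false, false, false] ![false, true, false] 1 (by decide)) (step' ![false, true, false] ![true, true, false] 0 (by decide))) (step' ![true, true, false] ![true, false, false] 1 (by decide)))

private lemma h101 : Relation.ReflTransGen (fun a b => ∃ i : Fin 3, b = Function.update a i (fstar a i)) ![true, false, true] ![false, false, false] := (Relation.ReflTransGen.trans (step' ![true, false, true] ![true, false, false] 2 (by decide)) (step' ![true, false, false] ![false, false, false] 0 (by decide)))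

private lemma g101 : Relation.ReflTransGen (fun a b => ∃ i : Fin 3, b = Function.update a i (fstar a i)) ![false, false, false] ![true, false, true] := (Relation.ReflTransGen.trans (step' ![false, false, false] ![false, false, true] 2 (by decide)) (step' ![false, false, true] ![true, false, true] 0 (by decide)))

private lemma h110 : Relation.ReflTransGen (fun a b => ∃ i : Fin 3, b = Function.update a i (fstar a i)) ![true, true, false] ![false, false, false] := (Relation.ReflTransGen.trans (step' ![true, true, false] ![true, false, false] 1 (by decide)) (step' ![true, false, false] ![false, false, false] 0 (by decide)))

private lemma g110 : Relation.ReflTransGen (fun a b => ∃ i : Fin 3, b = Function.update a i (fstar a i)) ![false, false, false] ![true, true, false] := (Relation.ReflTransGen.trans (step' ![false, false, false] ![false, true, false] 1 (by decide)) (step' ![false, true, false] ![true, true, false] 0 (by decide)))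

private lemma h111 : Relation.ReflTransGen (fun a b => ∃ i : Fin 3, b = Function.update a i (fstar a i)) ![true, true, true] ![false, false, false] := (Relation.ReflTransGen.trans (Relation.ReflTransGen.trans (step' ![true, true, true] ![false, true, true] 0 (by decide)) (step' ![false, true, true] ![false, false, true] 1 (by decide))) (step' ![false, false, true] ![false, false, false] 2 (by decide)))

private lemma g111 : Relation.ReflTransGen (fun a b => ∃ i : Fin 3, b = Function.update a i (fstar a i)) ![false, false, false] ![true, true, true] := (Relation.ReflTransGen.trans (Relation.ReflTransGen.trans (step' ![false, false, false] ![false, true, false] 1 (by decide)) (step' ![false, true, false] ![true, true, false] 0 (by decide))) (step' ![true, true, false] ![true, true, true] 2 (by decide)))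

private lemma to_hub (a b c : Bool) : Relation.ReflTransGen (fun a b => ∃ i : Fin 3, b = Function.update a i (fstar a i)) ![a, b, c] ![false, false, false] := by
  cases a <;> cases b <;> cases c
  exacts [h000, h001, h010, h011, h100, h101, h110, h111]

private lemma from_hub (a b c : Bool) : Relation.ReflTransGen (fun a b => ∃ i : Fin 3, b = Function.update a i (fstar a i)) ![false, false, false] ![a, b, c] := by
  cases a <;> cases b <;> cases c
  exacts [g000, g001, g010, g011, g100, g101, g110, g111]

/-- the asynchronous iteration graph Γ(f*), with an arc from x to
F_{f*}(i,x) = x updated at coordinate i by (f* x) i, is strongly connected. -/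
theorem fstar_iteration_graph_strongly_connected :
    ∀ x y : Fin 3 → Bool,
      Relation.ReflTransGen
        (fun a b => ∃ i : Fin 3, b = Function.update a i (fstar a i)) x y := by
  intro x y
  have hx : x = ![x 0, x 1, x 2] := by funext j; fin_cases j <;> rfl
  have hy : y = ![y 0, y 1, y 2] := by funext j; fin_cases j <;> rfl
  rw [hx, hy]
  exact (to_hub (x 0) (x 1) (x 2)).trans (from_hub (y 0) (y 1) (y 2))
end

section
/- For the map f*(x_1,x_2,x_3) = (x_2 ⊕ x_3, x_1 ⊕ ¬x_3, ¬x_3), the associated Markov matrix (with entries 1/3 on off-diagonal arcs of Γ(f*) and diagonal entries making row sums 1) is doubly stochastic. -/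
open scoped Classical BigOperators

/-!
Rows sum to 1 by the choice of the diagonal. Each vertex of an iteration graph on `n` coordinates
has at most `n` out-arcs, one per coordinate, so the off-diagonal part of a row is at most
`n · (1/n) = 1` and the diagonal is nonnegative. Column `y` sums to
`1 - outDegree y / n + inDegree y / n`, so the matrix is doubly stochastic exactly when every vertex
of `Γ(f*)` has as many proper in-arcs as proper out-arcs; for the eight vertices of `{0,1}^3`
this is checked by evaluation.
-/

open Finset

section Degree

variable {α : Type*} [Fintype α] [DecidableEq α] (arc : α → α → Prop) [DecidableRel arc]

def outDegree (x : α) : ℕ := #((univ.erase x).filter (arc x))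

def inDegree (y : α) : ℕ := #((univ.erase y).filter (arc · y))

end Degree

section MarkovMatrix

variable {α : Type*} [Fintype α] [DecidableEq α] {arc : α → α → Prop} [DecidableRel arc]
  {M : α → α → ℝ} {c : ℝ}

theorem sum_erase_row_eq_outDegree_mul
    (hMoff : ∀ x y, x ≠ y → M x y = if arc x y then c else 0) (x : α) :
    ∑ y ∈ univ.erase x, M x y = outDegree arc x * c := by
  rw [sum_congr rfl fun y hy => hMoff x y (ne_of_mem_erase hy).symm, sum_ite,
    sum_const_zero, add_zero, sum_const, nsmul_eq_mul, outDegree]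

theorem sum_erase_col_eq_inDegree_mul
    (hMoff : ∀ x y, x ≠ y → M x y = if arc x y then c else 0) (y : α) :
    ∑ x ∈ univ.erase y, M x y = inDegree arc y * c := by
  rw [sum_congr rfl fun x hx => hMoff x y (ne_of_mem_erase hx), sum_ite,
    sum_const_zero, add_zero, sum_const, nsmul_eq_mul, inDegree]

theorem sum_row_eq_one (hMdiag : ∀ x, M x x = 1 - ∑ y ∈ univ.erase x, M x y) (x : α) :
    ∑ y, M x y = 1 := by
  rw [← add_sum_erase _ _ (mem_univ x), hMdiag x]
  ring

theorem sum_col_eq_one (hMoff : ∀ x y, x ≠ y → M x y = if arc x y then c else 0)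
    (hMdiag : ∀ x, M x x = 1 - ∑ y ∈ univ.erase x, M x y)
    (hdeg : ∀ y, inDegree arc y = outDegree arc y) (y : α) :
    ∑ x, M x y = 1 := by
  rw [← add_sum_erase _ _ (mem_univ y), hMdiag y, sum_erase_row_eq_outDegree_mul hMoff,
    sum_erase_col_eq_inDegree_mul hMoff, hdeg]
  ring

theorem markov_nonneg (hMoff : ∀ x y, x ≠ y → M x y = if arc x y then c else 0)
    (hMdiag : ∀ x, M x x = 1 - ∑ y ∈ univ.erase x, M x y)
    (hc : 0 ≤ c) (hdeg : ∀ x, outDegree arc x * c ≤ 1) (x y : α) :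
    0 ≤ M x y := by
  rcases eq_or_ne x y with rfl | hxy
  · rw [hMdiag x, sum_erase_row_eq_outDegree_mul hMoff]
    linarith [hdeg x]
  · rw [hMoff x y hxy]
    split_ifs <;> simp [hc]

end MarkovMatrix

section IterationGraph

variable {ι β : Type*} [Fintype ι] [DecidableEq ι] [Fintype β] [DecidableEq β]

/-- The arcs `x → F_f(i, x)` of the asynchronous iteration graph `Γ(f)`. -/
def IterationArc (f : (ι → β) → ι → β) (x y : ι → β) : Prop :=
  ∃ i, y = Function.update x i (f x i)

instance (f : (ι → β) → ι → β) : DecidableRel (IterationArc f) := fun x y =>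
  inferInstanceAs (Decidable (∃ i, y = Function.update x i (f x i)))

theorem outDegree_iterationArc_le (f : (ι → β) → ι → β) (x : ι → β) :
    outDegree (IterationArc f) x ≤ Fintype.card ι := by
  refine (card_le_card (t := univ.image fun i => Function.update x i (f x i))
    fun y hy => ?_).trans card_image_le
  obtain ⟨i, rfl⟩ := (mem_filter.mp hy).2
  exact mem_image_of_mem _ (mem_univ i)

end IterationGraph

theorem inDegree_eq_outDegree_fstar (y : Fin 3 → Bool) :
    inDegree (IterationArc fstar) y = outDegree (IterationArc fstar) y := by
  revert y
  decide

/-- the Markov matrix associated to the iteration graph Γ(f*)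
(off-diagonal entries 1/3 on arcs, diagonal completing row sums to 1) is doubly
stochastic. -/
theorem fstar_markov_doubly_stochastic
    (M : (Fin 3 → Bool) → (Fin 3 → Bool) → ℝ)
    (hMoff : ∀ x y, x ≠ y →
      M x y = if (∃ i : Fin 3, y = Function.update x i (fstar x i))
        then (1 : ℝ) / 3 else 0)
    (hMdiag : ∀ x, M x x = 1 - ∑ y ∈ Finset.univ.erase x, M x y) :
    (∀ x y, 0 ≤ M x y) ∧ (∀ x, ∑ y, M x y = 1) ∧ (∀ y, ∑ x, M x y = 1) := by
  have hMarc : ∀ x y, x ≠ y → M x y = if IterationArc fstar x y then (1 : ℝ) / 3 else 0 :=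
    fun x y hxy => by rw [hMoff x y hxy]; congr
  have hout : ∀ x, (outDegree (IterationArc fstar) x : ℝ) * (1 / 3) ≤ 1 := fun x => by
    have : (outDegree (IterationArc fstar) x : ℝ) ≤ 3 := by
      exact_mod_cast (outDegree_iterationArc_le fstar x).trans_eq (Fintype.card_fin 3)
    linarith
  exact ⟨markov_nonneg hMarc hMdiag (by norm_num) hout, sum_row_eq_one hMdiag,
    sum_col_eq_one hMarc hMdiag inDegree_eq_outDegree_fstar⟩
end

section
/- For a cyclic Gray code on n ≥ 2 bits produced by Construction B from an (n−2)-bit code using parameter l, the transition counts of the two new bit positions satisfy TC_n(n−1) = TC_n(n) = l. -/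
/-!  Construction B (van Zanten–Suparta).  The transition sequence of the
(n−2)-bit cyclic Gray code is decomposed as
  S_{n−2} = s_{i_1}, u_0, s_{i_2}, u_1, …, s_{i_l}, v
with `i_1 = 1`, `i_2 = 2`, `u_0 = ∅` and `l` even.  Writing `B j` for the j-th
block (`B j = u j` for `j < l−1` and `B (l−1) = v`) and `t j = s_{i_j}`, the
n-bit transition sequence `S_n` traverses the blocks of `S_{n−2}` four times
(twice forward, twice backward); in two of the four passes the chosen
transitions `s_{i_j}` are kept, while in the other two passes they are replaced
by transitions on the two new bits `n−1` and `n`, taken alternately.  -/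

/-- A forward pass keeping the chosen transitions: `t 1, B 0, t 2, B 1, …`
(this is exactly `S_{n−2}`). -/
def passOld (l : ℕ) (t : ℕ → ℕ) (B : ℕ → List ℕ) : List ℕ :=
  (List.range l).flatMap fun j => t (j + 1) :: B j

/-- A forward pass where the chosen transitions are replaced by the new bits
`n−1` and `n`, alternately. -/
def passNew (n l : ℕ) (B : ℕ → List ℕ) : List ℕ :=
  (List.range l).flatMap fun j => (if j % 2 = 0 then n - 1 else n) :: B j

/-- The corresponding backward pass keeping the chosen transitions. -/
def passOldRev (l : ℕ) (t : ℕ → ℕ) (B : ℕ → List ℕ) : List ℕ :=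
  (List.range l).reverse.flatMap fun j => (B j).reverse ++ [t (j + 1)]

/-- The corresponding backward pass on the new bits (alternation swapped). -/
def passNewRev (n l : ℕ) (B : ℕ → List ℕ) : List ℕ :=
  (List.range l).reverse.flatMap fun j => (B j).reverse ++ [if j % 2 = 0 then n else n - 1]

/-- The transition sequence `S_n` produced by Construction B. -/
def constructionB (n l : ℕ) (t : ℕ → ℕ) (B : ℕ → List ℕ) : List ℕ :=
  passOld l t B ++ passNew n l B ++ passOldRev l t B ++ passNewRev n l B

lemma list_sum_range (f : ℕ → ℕ) (m : ℕ) :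
    ((List.range m).map f).sum = ∑ j ∈ Finset.range m, f j := by
  induction m with
  | zero => simp
  | succ m ih => rw [List.range_succ, Finset.sum_range_succ]; simp [ih]

lemma sum_alt (c d k : ℕ) :
    (∑ j ∈ Finset.range (2 * k), (if j % 2 = 0 then c else d)) = k * c + k * d := by
  induction k with
  | zero => simp
  | succ k ih =>
      have h2 : 2 * (k + 1) = (2 * k + 1) + 1 := by ring
      rw [h2, Finset.sum_range_succ, Finset.sum_range_succ, ih]
      have e1 : (2 * k) % 2 = 0 := by omega
      have e2 : (2 * k + 1) % 2 = 1 := by omega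
      rw [e1, e2]
      simp
      ring

lemma count_pass (m l : ℕ) (g : ℕ → ℕ) (B : ℕ → List ℕ)
    (hB : ∀ j < l, (B j).count m = 0) :
    ((List.range l).flatMap fun j => g j :: B j).count m
      = ∑ j ∈ Finset.range l, (if g j = m then 1 else 0) := by
  rw [List.count_flatMap]
  rw [show (List.count m ∘ fun j => g j :: B j)
      = fun j => (g j :: B j).count m from rfl]
  rw [list_sum_range]
  apply Finset.sum_congr rfl
  intro j hj
  have := hB j (Finset.mem_range.mp hj)
  simp [List.count_cons, this]

lemma count_passRev (m l : ℕ) (g : ℕ → ℕ) (B : ℕ → List ℕ)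
    (hB : ∀ j < l, (B j).count m = 0) :
    ((List.range l).reverse.flatMap fun j => (B j).reverse ++ [g j]).count m
      = ∑ j ∈ Finset.range l, (if g j = m then 1 else 0) := by
  rw [List.count_flatMap, List.map_reverse, List.sum_reverse]
  rw [show (List.count m ∘ fun j => (B j).reverse ++ [g j])
      = fun j => ((B j).reverse ++ [g j]).count m from rfl]
  rw [list_sum_range]
  apply Finset.sum_congr rfl
  intro j hj
  have := hB j (Finset.mem_range.mp hj)
  simp [List.count_append, List.count_reverse, this, List.count_singleton]

/-- for a cyclic Gray code on n ≥ 4 bits produced by Construction B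
from an (n−2)-bit cyclic Gray code using the (even) parameter l, the transition
counts of the two new bit positions satisfy TC_n(n−1) = TC_n(n) = l. -/
theorem constructionB_new_bit_transition_counts
    (n : ℕ) (hn : 4 ≤ n)
    (l : ℕ) (hl_even : Even l) (hl_pos : 0 < l)
    (S2 : List ℕ) (hS2len : S2.length = 2 ^ (n - 2))
    (hS2gray : ∀ x ∈ S2, 1 ≤ x ∧ x ≤ n - 2)
    (t : ℕ → ℕ) (B : ℕ → List ℕ)
    (hu0 : B 0 = [])
    (hdecomp : S2 = passOld l t B)
    (hchosen : ∀ j, 1 ≤ j → j ≤ l → (1 ≤ t j ∧ t j ≤ n - 2))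
    (hblocks : ∀ j, j < l → ∀ x ∈ B j, 1 ≤ x ∧ x ≤ n - 2)
    (Sn : List ℕ) (hSn : Sn = constructionB n l t B) :
    Sn.count (n - 1) = l ∧ Sn.count n = l := by
  rw [constructionB] at hSn
  obtain ⟨k, hk⟩ := hl_even
  have hl2 : l = 2 * k := by omega
  have hB1 : ∀ j < l, (B j).count (n - 1) = 0 := by
    intro j hj
    refine List.count_eq_zero.mpr fun h => ?_
    have := hblocks j hj _ h; omega
  have hB2 : ∀ j < l, (B j).count n = 0 := by
    intro j hj
    refine List.count_eq_zero.mpr fun h => ?_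
    have := hblocks j hj _ h; omega
  have ht1 : ∀ j < l, (if t (j + 1) = n - 1 then (1:ℕ) else 0) = 0 := by
    intro j hj
    have := hchosen (j + 1) (by omega) (by omega)
    have : t (j + 1) ≠ n - 1 := by omega
    simp [this]
  have ht2 : ∀ j < l, (if t (j + 1) = n then (1:ℕ) else 0) = 0 := by
    intro j hj
    have := hchosen (j + 1) (by omega) (by omega)
    have : t (j + 1) ≠ n := by omega
    simp [this]
  have hPO1 : (passOld l t B).count (n - 1) = 0 := by
    rw [passOld, count_pass _ _ _ _ hB1]
    exact Finset.sum_eq_zero fun j hj => ht1 j (Finset.mem_range.mp hj)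
  have hPO2 : (passOld l t B).count n = 0 := by
    rw [passOld, count_pass _ _ _ _ hB2]
    exact Finset.sum_eq_zero fun j hj => ht2 j (Finset.mem_range.mp hj)
  have hPOR1 : (passOldRev l t B).count (n - 1) = 0 := by
    rw [passOldRev, count_passRev _ _ _ _ hB1]
    exact Finset.sum_eq_zero fun j hj => ht1 j (Finset.mem_range.mp hj)
  have hPOR2 : (passOldRev l t B).count n = 0 := by
    rw [passOldRev, count_passRev _ _ _ _ hB2]
    exact Finset.sum_eq_zero fun j hj => ht2 j (Finset.mem_range.mp hj)
  have hne : n ≠ n - 1 := by omega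
  have hPN1 : (passNew n l B).count (n - 1) = k := by
    rw [passNew, count_pass _ _ _ _ hB1]
    have : ∀ j ∈ Finset.range l,
        (if (if j % 2 = 0 then n - 1 else n) = n - 1 then (1:ℕ) else 0)
        = (if j % 2 = 0 then (1:ℕ) else 0) := by
      intro j _
      by_cases h : j % 2 = 0 <;> simp [h, hne]
    rw [Finset.sum_congr rfl this, hl2, sum_alt]
    ring
  have hPN2 : (passNew n l B).count n = k := by
    rw [passNew, count_pass _ _ _ _ hB2]
    have : ∀ j ∈ Finset.range l,
        (if (if j % 2 = 0 then n - 1 else n) = n then (1:ℕ) else 0)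
        = (if j % 2 = 0 then (0:ℕ) else 1) := by
      intro j _
      by_cases h : j % 2 = 0 <;> simp [h, hne.symm, Ne.symm hne]
    rw [Finset.sum_congr rfl this, hl2, sum_alt]
    ring
  have hPNR1 : (passNewRev n l B).count (n - 1) = k := by
    rw [passNewRev, count_passRev _ _ _ _ hB1]
    have : ∀ j ∈ Finset.range l,
        (if (if j % 2 = 0 then n else n - 1) = n - 1 then (1:ℕ) else 0)
        = (if j % 2 = 0 then (0:ℕ) else 1) := by
      intro j _
      by_cases h : j % 2 = 0 <;> simp [h, hne]
    rw [Finset.sum_congr rfl this, hl2, sum_alt]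
    ring
  have hPNR2 : (passNewRev n l B).count n = k := by
    rw [passNewRev, count_passRev _ _ _ _ hB2]
    have : ∀ j ∈ Finset.range l,
        (if (if j % 2 = 0 then n else n - 1) = n then (1:ℕ) else 0)
        = (if j % 2 = 0 then (1:ℕ) else 0) := by
      intro j _
      by_cases h : j % 2 = 0 <;> simp [h, Ne.symm hne]
    rw [Finset.sum_congr rfl this, hl2, sum_alt]
    ring
  subst hSn
  constructor <;> simp [List.count_append, hPO1, hPO2, hPOR1, hPOR2, hPN1, hPN2, hPNR1, hPNR2] <;> omega
end
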